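/- arXiv:2205.08097 — 3 statements merged into one kernel-verified Lean document; each statement's English description precedes it below -/
import Mathlib

section
/- Let C and D be finite sets with |C| = |D|, and let x, y : C → D be bijections. Let F ⊆ C be a subset of 'fixable' crossings with |F| = n, and let a : D → ℚ be a function with values in {1/4, -1/4}. Define f : C × D → ℚ by f(c, d) = -a(d) if c ∈ F and f(c, d) = a(d) if c ∉ F. Then |∑_{c ∈ C} f(c, x(c)) − ∑_{c ∈ C} f(c, y(c))| ≤ n. -/
theorem stmt_0 {C D : Type} [Fintype C] [Fintype D] [DecidableEq C]
    (hCD : Fintype.card C = Fintype.card D)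
    (x y : C ≃ D) (F : Finset C) (n : ℕ) (hF : F.card = n)
    (a : D → ℚ) (ha : ∀ d, a d = 1/4 ∨ a d = -(1/4))
    (f : C → D → ℚ) (hf : ∀ c d, f c d = if c ∈ F then -a d else a d) :
    |∑ c, f c (x c) - ∑ c, f c (y c)| ≤ (n : ℚ) := by
  have hz : ∀ z : C ≃ D, ∑ c, f c (z c) = ∑ d, a d - 2 * ∑ c ∈ F, a (z c) := by
    intro z
    have h1 : ∑ c, f c (z c)
        = ∑ c, (a (z c) - (if c ∈ F then 2 * a (z c) else 0)) := by
      apply Finset.sum_congr rfl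
      intro c _
      rw [hf]
      split <;> ring
    rw [h1, Finset.sum_sub_distrib, Equiv.sum_comp z a,
      Finset.sum_ite_mem, Finset.univ_inter, Finset.mul_sum]
  rw [hz x, hz y]
  have h2 : (∑ d, a d - 2 * ∑ c ∈ F, a (x c)) - (∑ d, a d - 2 * ∑ c ∈ F, a (y c))
      = 2 * ∑ c ∈ F, (a (y c) - a (x c)) := by
    rw [Finset.sum_sub_distrib]; ring
  rw [h2, abs_mul]
  have h3 : |∑ c ∈ F, (a (y c) - a (x c))| ≤ ∑ c ∈ F, |a (y c) - a (x c)| :=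
    Finset.abs_sum_le_sum_abs _ _
  have h4 : ∑ c ∈ F, |a (y c) - a (x c)| ≤ ∑ c ∈ F, (1/2 : ℚ) := by
    apply Finset.sum_le_sum
    intro c _
    rcases ha (y c) with h | h <;> rcases ha (x c) with h' | h' <;>
      rw [h, h'] <;> simp [abs_le] <;> norm_num
  have h5 : ∑ c ∈ F, (1/2 : ℚ) = n / 2 := by
    rw [Finset.sum_const, hF]; push_cast; ring
  calc |(2:ℚ)| * |∑ c ∈ F, (a (y c) - a (x c))|
      ≤ 2 * (n / 2) := by
        rw [abs_two]
        exact mul_le_mul_of_nonneg_left (le_trans h3 (h4.trans h5.le)) (by norm_num)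
    _ = n := by ring
end

section
/- Let D be a finite set (of domains), F and S disjoint finite sets with C = F ∪ S (fixable and static crossings), a : D → {1/4, −1/4}, and x : C → D a bijection. Define δ(x) = w + ∑_{c ∈ C} f(c, x(c)) where f(c,d) = a(d) if c ∈ S and f(c,d) = −a(d) if c ∈ F, and w ∈ ℚ is a constant. Then for any two bijections x, y : C → D, δ(x) − δ(y) is an integer multiple of 1/2, and |δ(x) − δ(y)| ≤ |F|. -/
theorem stmt_5 {C D : Type} [Fintype C] [Fintype D] [DecidableEq C]
    (F S : Finset C) (hdisj : Disjoint F S) (hunion : F ∪ S = Finset.univ)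
    (a : D → ℚ) (ha : ∀ d, a d = 1/4 ∨ a d = -(1/4)) (w : ℚ)
    (δ : (C ≃ D) → ℚ)
    (hδ : ∀ z : C ≃ D, δ z = w + ∑ c, (if c ∈ S then a (z c) else -a (z c)))
    (x y : C ≃ D) :
    (∃ k : ℤ, δ x - δ y = (k : ℚ) / 2) ∧ |δ x - δ y| ≤ (F.card : ℚ) := by
  classical
  set g : C → ℚ := fun c => a (x c) - a (y c) with hg
  have hsplit : ∀ h : C → ℚ, ∑ c, h c = ∑ c ∈ F, h c + ∑ c ∈ S, h c := by
    intro h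
    rw [← hunion, Finset.sum_union hdisj]
  have hzero : ∑ c, g c = 0 := by
    have h1 : ∑ c, a (x c) = ∑ d, a d := Fintype.sum_equiv x _ _ (fun c => rfl)
    have h2 : ∑ c, a (y c) = ∑ d, a d := Fintype.sum_equiv y _ _ (fun c => rfl)
    simp [hg, Finset.sum_sub_distrib, h1, h2]
  have hS : ∑ c ∈ S, g c = -∑ c ∈ F, g c := by
    have := hsplit g
    rw [hzero] at this
    linarith
  have hdiff : δ x - δ y = -2 * ∑ c ∈ F, g c := by
    rw [hδ x, hδ y]
    have key : (w + ∑ c, (if c ∈ S then a (x c) else -a (x c)))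
        - (w + ∑ c, (if c ∈ S then a (y c) else -a (y c)))
        = ∑ c, (if c ∈ S then g c else -g c) := by
      rw [add_sub_add_left_eq_sub, ← Finset.sum_sub_distrib]
      exact Finset.sum_congr rfl fun c _ => by
        by_cases hc : c ∈ S <;> simp [hc, hg] <;> ring
    rw [key, hsplit]
    have hF' : ∀ c ∈ F, (if c ∈ S then g c else -g c) = -g c := by
      intro c hc
      have : c ∉ S := Finset.disjoint_left.mp hdisj hc
      simp [this]
    have hS' : ∀ c ∈ S, (if c ∈ S then g c else -g c) = g c := by
      intro c hc; simp [hc]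
    rw [Finset.sum_congr rfl hF', Finset.sum_congr rfl hS', Finset.sum_neg_distrib, hS]
    ring
  have habs : ∀ c, |g c| ≤ 1/2 := fun c => by
    rcases ha (x c) with h1 | h1 <;> rcases ha (y c) with h2 | h2 <;>
      simp [hg, h1, h2] <;> norm_num [abs_le]
  have hkey : ∀ c : C, ∃ mm : ℤ, (mm : ℚ) = 4 * g c := fun c => by
    rcases ha (x c) with h1 | h1 <;> rcases ha (y c) with h2 | h2 <;>
      [exact ⟨0, by simp [hg, h1, h2]⟩;
       exact ⟨2, by simp [hg, h1, h2]; norm_num⟩;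
       exact ⟨-2, by simp [hg, h1, h2]; norm_num⟩;
       exact ⟨0, by simp [hg, h1, h2]⟩]
  choose m hm using hkey
  constructor
  · refine ⟨-∑ c ∈ F, m c, ?_⟩
    have hsum : ((∑ c ∈ F, m c : ℤ) : ℚ) = 4 * ∑ c ∈ F, g c := by
      push_cast
      rw [Finset.mul_sum]
      exact Finset.sum_congr rfl fun c _ => hm c
    rw [hdiff]
    push_cast at hsum ⊢
    linarith
  · rw [hdiff]
    have h1 : |∑ c ∈ F, g c| ≤ ∑ c ∈ F, |g c| := Finset.abs_sum_le_sum_abs _ _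
    have h2 : ∑ c ∈ F, |g c| ≤ ∑ c ∈ F, (1/2 : ℚ) :=
      Finset.sum_le_sum fun c _ => habs c
    have h3 : ∑ c ∈ F, (1/2 : ℚ) = F.card / 2 := by
      rw [Finset.sum_const, nsmul_eq_mul]; ring
    rw [abs_mul]
    have h4 : |(-2 : ℚ)| = 2 := by norm_num
    rw [h4]
    nlinarith [abs_nonneg (∑ c ∈ F, g c)]
end

section
/- Suppose a function f : C × D → ℚ (C, D finite sets of equal cardinality) satisfies |f(c,d) − f(c',d)| ≤ 1/2 for all c, c' ∈ C and d ∈ D, and there is a subset F ⊆ C with |F| = n such that f(c,d) = f(c',d) whenever c, c' are both in F or both in C \ F. Then for any two bijections x, y : C → D, |∑_{c} f(c, x(c)) − ∑_{c} f(c, y(c))| ≤ n. -/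
theorem stmt_6 {C D : Type} [Fintype C] [Fintype D] [DecidableEq C]
    (hCD : Fintype.card C = Fintype.card D)
    (f : C → D → ℚ)
    (hbound : ∀ c c' : C, ∀ d : D, |f c d - f c' d| ≤ 1/2)
    (F : Finset C) (n : ℕ) (hF : F.card = n)
    (hsame : ∀ c c' : C, ∀ d : D,
      ((c ∈ F ∧ c' ∈ F) ∨ (c ∉ F ∧ c' ∉ F)) → f c d = f c' d)
    (x y : C ≃ D) :
    |∑ c, f c (x c) - ∑ c, f c (y c)| ≤ (n : ℚ) := by
  classical
  set σ : C ≃ C := x.trans y.symm with hσ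
  have hyx : ∀ c, y (σ c) = x c := fun c => by simp [hσ]
  have hsum : ∑ c, f c (y c) = ∑ c, f (σ c) (x c) := by
    rw [← Equiv.sum_comp σ (fun c => f c (y c))]
    exact Finset.sum_congr rfl fun c _ => by rw [hyx]
  rw [hsum, ← Finset.sum_sub_distrib]
  have key : ∀ c : C, |f c (x c) - f (σ c) (x c)| ≤
      (if ¬((c ∈ F) ↔ (σ c ∈ F)) then (1/2 : ℚ) else 0) := by
    intro c
    by_cases h : (c ∈ F) ↔ (σ c ∈ F)
    · have heq : f c (x c) = f (σ c) (x c) := by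
        by_cases hc : c ∈ F
        · exact hsame _ _ _ (Or.inl ⟨hc, h.mp hc⟩)
        · exact hsame _ _ _ (Or.inr ⟨hc, fun h' => hc (h.mpr h')⟩)
      simp [heq, h]
    · rw [if_pos h]
      exact hbound _ _ _
  have hB : (Finset.univ.filter fun c => ¬((c ∈ F) ↔ (σ c ∈ F))).card ≤ 2 * n := by
    set B := Finset.univ.filter fun c => ¬((c ∈ F) ↔ (σ c ∈ F)) with hBdef
    have hsplit : B.card = (B ∩ F).card + (B \ F).card := by
      rw [Finset.card_inter_add_card_sdiff]
    have h1 : (B ∩ F).card ≤ n := by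
      calc (B ∩ F).card ≤ F.card := Finset.card_le_card (Finset.inter_subset_right)
      _ = n := hF
    have h2 : (B \ F).card ≤ n := by
      have : (B \ F).card ≤ F.card := by
        apply Finset.card_le_card_of_injOn (fun c => σ c)
        · intro c hc
          simp only [hBdef, Finset.mem_coe, Finset.mem_sdiff, Finset.mem_filter] at hc
          by_contra hσc
          exact hc.1.2 (iff_of_false hc.2 hσc)
        · intro a _ b _ hab
          exact σ.injective hab
      omega
    omega
  calc |∑ c, (f c (x c) - f (σ c) (x c))|
      ≤ ∑ c, |f c (x c) - f (σ c) (x c)| := Finset.abs_sum_le_sum_abs _ _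
    _ ≤ ∑ c, (if ¬((c ∈ F) ↔ (σ c ∈ F)) then (1/2 : ℚ) else 0) :=
        Finset.sum_le_sum fun c _ => key c
    _ = (Finset.univ.filter fun c => ¬((c ∈ F) ↔ (σ c ∈ F))).card * (1/2 : ℚ) := by
        rw [← Finset.sum_filter, Finset.sum_const, nsmul_eq_mul]
    _ ≤ (2 * n : ℕ) * (1/2 : ℚ) := by
        apply mul_le_mul_of_nonneg_right _ (by norm_num)
        exact_mod_cast hB
    _ = (n : ℚ) := by push_cast; ring
end
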